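/- arXiv:1512.02954 — 9 statements merged into one kernel-verified Lean document; each statement's English description precedes it below -/
import Mathlib

section
/- If there exists an f-bad coloring C : [a,R]² → c (i.e., every C-weakly homogeneous subset H of [a,R] has cardinality at most f(min H)), then there exists an (a,f)-bad sequence m₀,…,m_{R−a} of c-tuples of natural numbers, i.e., a sequence with ‖mᵢ‖ < f(a+i) for all i ≤ R−a and such that for all i < j ≤ R−a, mᵢ ≰ mⱼ componentwise. -/
/-- `WHC C s h`: `h 0, …, h (s-1)` is a strictly increasing sequence that is
weakly homogeneous for the pair-coloring `C` (consecutive pairs get equal colors). -/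
def WHC (C : ℕ → ℕ → ℕ) (s : ℕ) (h : ℕ → ℕ) : Prop :=
  (∀ i, i + 1 < s → h i < h (i + 1)) ∧
  (∀ i, i + 2 < s → C (h i) (h (i + 1)) = C (h (i + 1)) (h (i + 2)))

/-- From an `f`-bad coloring of pairs in `[a,R]` in `c` colors, one obtains an
`(a,f)`-bad sequence `m₀, …, m_{R-a}` of `c`-tuples. -/
theorem bad_coloring_to_bad_sequence (a R c : ℕ) (f : ℕ → ℕ) (haR : a ≤ R)
    (C : ℕ → ℕ → ℕ)
    (hCrange : ∀ x y, a ≤ x → x < y → y ≤ R → C x y < c)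
    (hbad : ∀ (s : ℕ) (h : ℕ → ℕ), (∀ i, i < s → a ≤ h i ∧ h i ≤ R) →
      WHC C s h → s ≤ f (h 0)) :
    ∃ m : ℕ → Fin c → ℕ,
      (∀ i, i ≤ R - a → ∀ k, m i k < f (a + i)) ∧
      (∀ i j, i < j → j ≤ R - a → ¬ ∀ k, m i k ≤ m j k) := by
  classical
  -- `Ch k n s` : there is a chain of length `s` starting at `n`, inside `[n,R]`,
  -- all of whose consecutive pairs have color `k`.
  set Ch : ℕ → ℕ → ℕ → Prop := fun k n s => ∃ h : ℕ → ℕ, h 0 = n ∧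
      (∀ i, i < s → n ≤ h i ∧ h i ≤ R) ∧ (∀ i, i + 1 < s → h i < h (i + 1)) ∧
      (∀ i, i + 1 < s → C (h i) (h (i + 1)) = k) with hCh
  have hbound : ∀ k n s, a ≤ n → Ch k n s → s ≤ f n := by
    intro k n s han ⟨h, h0, hmem, hinc, hcol⟩
    have := hbad s h (fun i hi => ⟨le_trans han (hmem i hi).1, (hmem i hi).2⟩)
      ⟨hinc, fun i hi => by
        rw [hcol i (by omega), hcol (i + 1) (by omega)]⟩
    rwa [h0] at this
  have hne : ∀ k i, i ≤ R - a → 0 ∈ {s | Ch k (a + i) (s + 1)} := by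
    intro k i hi
    refine ⟨fun _ => a + i, rfl, fun t ht => ⟨le_rfl, ?_⟩,
      fun t ht => by omega, fun t ht => by omega⟩
    show a + i ≤ R
    omega
  have hBdd : ∀ k i, BddAbove {s | Ch k (a + i) (s + 1)} := by
    intro k i
    refine ⟨f (a + i), fun s hs => ?_⟩
    have := hbound k (a + i) (s + 1) (by omega) hs
    omega
  refine ⟨fun i k => sSup {s | Ch k.val (a + i) (s + 1)}, ?_, ?_⟩
  · intro i hi k
    show sSup {s | Ch k.val (a + i) (s + 1)} < f (a + i)
    have hmem := Nat.sSup_mem ⟨0, hne k.val i hi⟩ (hBdd k.val i)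
    have := hbound k.val (a + i) (sSup {s | Ch k.val (a + i) (s + 1)} + 1)
      (by omega) hmem
    omega
  · intro i j hij hj hle
    have hiR : i ≤ R - a := by omega
    have haij : a + i < a + j := by omega
    have hjR : a + j ≤ R := by omega
    have hk : C (a + i) (a + j) < c := hCrange (a + i) (a + j) (by omega) haij hjR
    set K : ℕ := C (a + i) (a + j) with hK
    -- longest chain at `a+j` with color `K`
    set s := sSup {s | Ch K (a + j) (s + 1)} with hs
    have hmem : Ch K (a + j) (s + 1) :=
      Nat.sSup_mem ⟨0, hne K j hj⟩ (hBdd K j)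
    obtain ⟨h, h0, hmemh, hinc, hcol⟩ := hmem
    -- prepend `a+i`
    have hch : Ch K (a + i) (s + 1 + 1) := by
      refine ⟨fun t => if t = 0 then a + i else h (t - 1), rfl, ?_, ?_, ?_⟩
      · intro t ht
        by_cases h0t : t = 0
        · simp [h0t]; omega
        · simp only [h0t, if_false]
          have := hmemh (t - 1) (by omega)
          omega
      · intro t ht
        by_cases h0t : t = 0
        · simp only [h0t, if_pos rfl]
          simp only [show ¬(0 + 1 = 0) by omega, if_false]
          simpa [h0] using haij
        · simp only [h0t, if_false, show ¬(t + 1 = 0) by omega]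
          have := hinc (t - 1) (by omega)
          simpa [show t - 1 + 1 = t + 1 - 1 by omega] using this
      · intro t ht
        by_cases h0t : t = 0
        · simp only [h0t, if_pos rfl, show ¬(0 + 1 = 0) by omega, if_false]
          simp [h0, hK]
        · simp only [h0t, if_false, show ¬(t + 1 = 0) by omega]
          have := hcol (t - 1) (by omega)
          simpa [show t - 1 + 1 = t + 1 - 1 by omega] using this
    have h1 : s + 1 ∈ {s | Ch K (a + i) (s + 1)} := hch
    have h2 : s + 1 ≤ sSup {s | Ch K (a + i) (s + 1)} :=
      le_csSup (hBdd K i) h1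
    have h3 : sSup {s | Ch K (a + i) (s + 1)} ≤ sSup {s | Ch K (a + j) (s + 1)} :=
      hle ⟨K, hk⟩
    omega
end

section
/- For all a ∈ ℕ, c ∈ ℕ, with a ≥ 1 or c ≥ 1, the weak Ramsey number wr_c(a) equals a^c, where wr_c(a) is the least R such that every coloring C : [0,R]² → c admits a C-weakly homogeneous set of cardinality a+1. -/
def ml (C : ℕ → ℕ → ℕ) (j : ℕ) : ℕ → ℕ
  | x => ((Finset.range x).attach.filter (fun y => C y.1 x = j)).sup fun y =>
      ml C j y.1 + 1
  termination_by x => x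
  decreasing_by exact Finset.mem_range.mp y.2

lemma ml_lt {C : ℕ → ℕ → ℕ} {j y x : ℕ} (hyx : y < x) (hc : C y x = j) :
    ml C j y < ml C j x := by
  conv_rhs => rw [ml]
  have hy : (⟨y, Finset.mem_range.mpr hyx⟩ : {z // z ∈ Finset.range x}) ∈
      (Finset.range x).attach.filter (fun z => C z.1 x = j) := by
    simp [hc]
  have := Finset.le_sup (f := fun z : {z // z ∈ Finset.range x} => ml C j z.1 + 1) hy
  dsimp only at this
  omega

lemma ml_rev {C : ℕ → ℕ → ℕ} {j x n : ℕ} (h1 : 0 < n) (h2 : n ≤ ml C j x) :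
    ∃ y, y < x ∧ C y x = j ∧ n - 1 ≤ ml C j y := by
  rw [ml] at h2
  rw [Finset.le_sup_iff (show (⊥ : ℕ) < n from h1)] at h2
  obtain ⟨y, hy, hle⟩ := h2
  rw [Finset.mem_filter] at hy
  exact ⟨y.1, Finset.mem_range.mp y.2, hy.2, by omega⟩

lemma chain_of_ml (C : ℕ → ℕ → ℕ) (j : ℕ) :
    ∀ n x, n ≤ ml C j x → ∃ h : ℕ → ℕ, h n = x ∧ (∀ i, i ≤ n → h i ≤ x) ∧
      ∀ i, i < n → h i < h (i + 1) ∧ C (h i) (h (i + 1)) = j := by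
  intro n
  induction n with
  | zero =>
    intro x _
    exact ⟨fun _ => x, rfl, fun i _ => le_rfl, fun i hi => absurd hi (by omega)⟩
  | succ n ih =>
    intro x hx
    obtain ⟨y, hyx, hcy, hml⟩ := ml_rev (by omega) hx
    obtain ⟨h0, h0n, h0le, h0chain⟩ := ih y (by simpa using hml)
    refine ⟨fun i => if i < n + 1 then h0 i else x, by simp, ?_, ?_⟩
    · intro i hi
      by_cases hc : i < n + 1
      · simp only [hc, if_pos]
        exact le_of_lt (lt_of_le_of_lt (h0le i (by omega)) hyx)
      · simp [hc]
    · intro i hi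
      by_cases hc : i + 1 < n + 1
      · have hc' : i < n + 1 := by omega
        simp only [hc, hc', if_pos]
        exact h0chain i (by omega)
      · have hi' : i = n := by omega
        subst hi'
        simp only [Nat.lt_irrefl, if_neg, Nat.lt_succ_self, if_pos]
        rw [h0n]
        exact ⟨hyx, hcy⟩

def dg (a i x : ℕ) : ℕ := x / a ^ i % a

lemma dg_inj {a : ℕ} (ha : 0 < a) :
    ∀ c x y, x < a ^ c → y < a ^ c → (∀ i, i < c → dg a i x = dg a i y) → x = y := by
  intro c
  induction c with
  | zero => intro x y hx hy _; simp [pow_zero] at hx hy; omega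
  | succ c ih =>
    intro x y hx hy hd
    have h0 : x % a = y % a := by
      have := hd 0 (by omega)
      simpa [dg] using this
    have hx' : x / a < a ^ c := by
      rw [Nat.div_lt_iff_lt_mul ha]
      calc x < a ^ (c + 1) := hx
        _ = a ^ c * a := pow_succ a c
    have hy' : y / a < a ^ c := by
      rw [Nat.div_lt_iff_lt_mul ha]
      calc y < a ^ (c + 1) := hy
        _ = a ^ c * a := pow_succ a c
    have hq : x / a = y / a := by
      apply ih (x / a) (y / a) hx' hy'
      intro i hi
      have := hd (i + 1) (by omega)
      simp only [dg] at this ⊢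
      rw [Nat.div_div_eq_div_mul, Nat.div_div_eq_div_mul, ← pow_succ']
      exact this
    have e1 := Nat.div_add_mod x a
    have e2 := Nat.div_add_mod y a
    have : a * (x / a) = a * (y / a) := by rw [hq]
    omega

lemma dg_div (a k i x : ℕ) : dg a i (x / a ^ k) = dg a (k + i) x := by
  simp [dg, Nat.div_div_eq_div_mul, pow_add]

def DC (a c x y : ℕ) : ℕ :=
  ((Finset.range c).filter (fun i => dg a i x ≠ dg a i y)).sup id

lemma dg_split {a : ℕ} (ha : 0 < a) (j z : ℕ) :
    z % a ^ (j + 1) = dg a j z * a ^ j + z % a ^ j := by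
  have h1 : z % a ^ (j + 1) / a ^ j = dg a j z := by
    rw [pow_succ, Nat.mod_mul_right_div_self]
    rfl
  have h2 : z % a ^ (j + 1) % a ^ j = z % a ^ j :=
    Nat.mod_mod_of_dvd z (pow_dvd_pow a (by omega))
  have h3 := Nat.div_add_mod (z % a ^ (j + 1)) (a ^ j)
  rw [h1, h2] at h3
  rw [mul_comm] at h3
  exact h3.symm

lemma dg_DC_lt {a c x y : ℕ} (ha : 0 < a) (hxy : x < y) (hy : y < a ^ c) :
    dg a (DC a c x y) x < dg a (DC a c x y) y := by
  set s := (Finset.range c).filter (fun i => dg a i x ≠ dg a i y) with hs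
  have hx : x < a ^ c := hxy.trans hy
  have hne : s.Nonempty := by
    by_contra hempty
    rw [Finset.not_nonempty_iff_eq_empty] at hempty
    have : x = y := by
      apply dg_inj ha c x y hx hy
      intro i hi
      by_contra hd
      have : i ∈ s := Finset.mem_filter.mpr ⟨Finset.mem_range.mpr hi, hd⟩
      simp [hempty] at this
    omega
  obtain ⟨j, hjs, hjsup⟩ := Finset.exists_mem_eq_sup s hne id
  have hDC : DC a c x y = j := by rw [DC, ← hs, hjsup]; rfl
  rw [hDC]
  obtain ⟨hjc, hjd⟩ := Finset.mem_filter.mp hjs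
  rw [Finset.mem_range] at hjc
  have habove : ∀ k, j < k → k < c → dg a k x = dg a k y := by
    intro k hk hkc
    by_contra hd
    have hks : k ∈ s := Finset.mem_filter.mpr ⟨Finset.mem_range.mpr hkc, hd⟩
    have := Finset.le_sup (f := id) hks
    rw [hjsup] at this
    simp only [id] at this
    omega
  have hP : 0 < a ^ (j + 1) := pow_pos ha _
  have hq : x / a ^ (j + 1) = y / a ^ (j + 1) := by
    apply dg_inj ha (c - (j + 1))
    · rw [Nat.div_lt_iff_lt_mul hP]
      calc x < a ^ c := hx
        _ = a ^ (c - (j + 1)) * a ^ (j + 1) := by rw [← pow_add]; congr 1; omega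
    · rw [Nat.div_lt_iff_lt_mul hP]
      calc y < a ^ c := hy
        _ = a ^ (c - (j + 1)) * a ^ (j + 1) := by rw [← pow_add]; congr 1; omega
    · intro i hi
      rw [dg_div, dg_div]
      exact habove _ (by omega) (by omega)
  have hmod : x % a ^ (j + 1) < y % a ^ (j + 1) := by
    have ex := Nat.div_add_mod x (a ^ (j + 1))
    have ey := Nat.div_add_mod y (a ^ (j + 1))
    rw [hq] at ex
    have : a ^ (j + 1) * (y / a ^ (j + 1)) = a ^ (j + 1) * (y / a ^ (j + 1)) := rfl
    generalize a ^ (j + 1) * (y / a ^ (j + 1)) = t at ex ey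
    omega
  rw [dg_split ha j x, dg_split ha j y] at hmod
  have hrx : x % a ^ j < a ^ j := Nat.mod_lt _ (pow_pos ha j)
  have hry : y % a ^ j < a ^ j := Nat.mod_lt _ (pow_pos ha j)
  by_contra hle
  push_neg at hle
  have hlt : dg a j y < dg a j x := lt_of_le_of_ne hle (fun e => hjd e.symm)
  generalize hu : dg a j x = u at hmod hlt
  generalize hv : dg a j y = v at hmod hlt
  generalize hQ : a ^ j = Q at hmod hrx hry
  have key : v * Q + Q ≤ u * Q := by
    calc v * Q + Q = (v + 1) * Q := by ring
      _ ≤ u * Q := Nat.mul_le_mul_right _ (by omega)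
  omega

/-- The weak Ramsey number `wr_c(a)` equals `a^c` (unless `a = c = 0`):
`a^c` is the least `R` such that every coloring of pairs from `[0,R]` in `c`
colors admits a weakly homogeneous set of size `a + 1`. -/
theorem weak_ramsey_number_eq_pow (a c : ℕ) (h : 1 ≤ a ∨ 1 ≤ c) :
    IsLeast {R | ∀ C : ℕ → ℕ → ℕ, (∀ x y, x < y → y ≤ R → C x y < c) →
      ∃ h : ℕ → ℕ, (∀ i, i < a + 1 → h i ≤ R) ∧ WHC C (a + 1) h} (a ^ c) := by
  constructor
  · -- membership: every coloring of [0, a^c] has a weakly homogeneous chain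
    intro C hC
    rcases Nat.eq_zero_or_pos a with ha0 | ha
    · subst ha0
      exact ⟨fun _ => 0, fun i _ => Nat.zero_le _,
        fun i hi => absurd hi (by omega), fun i hi => absurd hi (by omega)⟩
    rcases Nat.eq_zero_or_pos c with hc0 | hc
    · subst hc0
      have := hC 0 1 (by omega) (by simp)
      omega
    by_cases hex : ∃ x, x ≤ a ^ c ∧ ∃ j, j < c ∧ a ≤ ml C j x
    · obtain ⟨x, hx, j, _, hml⟩ := hex
      obtain ⟨f, _, fle, fchain⟩ := chain_of_ml C j a x hml
      refine ⟨f, fun i hi => le_trans (fle i (by omega)) hx, ?_, ?_⟩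
      · intro i hi
        exact (fchain i (by omega)).1
      · intro i hi
        rw [(fchain i (by omega)).2, (fchain (i + 1) (by omega)).2]
    · push_neg at hex
      exfalso
      have key : ∀ x y, x < y → y ≤ a ^ c →
          (fun (z : ℕ) (j : Fin c) => (⟨ml C j.1 z % a, Nat.mod_lt _ ha⟩ : Fin a)) x ≠
          (fun (z : ℕ) (j : Fin c) => (⟨ml C j.1 z % a, Nat.mod_lt _ ha⟩ : Fin a)) y := by
        intro x y hxy hy hfeq
        have hj : C x y < c := hC x y hxy hy
        have hlt : ml C (C x y) x < ml C (C x y) y := ml_lt hxy rfl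
        have hxa : ml C (C x y) x < a := hex x (by omega) (C x y) hj
        have hya : ml C (C x y) y < a := hex y hy (C x y) hj
        have := congrFun hfeq ⟨C x y, hj⟩
        simp only [Fin.mk.injEq] at this
        rw [Nat.mod_eq_of_lt hxa, Nat.mod_eq_of_lt hya] at this
        omega
      obtain ⟨x, hx, y, hy, hne, heq⟩ :=
        Finset.exists_ne_map_eq_of_card_lt_of_maps_to
          (s := Finset.range (a ^ c + 1)) (t := (Finset.univ : Finset (Fin c → Fin a)))
          (by simp) (fun x _ => Finset.mem_univ _)
          (f := fun (z : ℕ) (j : Fin c) => (⟨ml C j.1 z % a, Nat.mod_lt _ ha⟩ : Fin a))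
      rw [Finset.mem_range] at hx hy
      rcases hne.lt_or_gt with hlt | hlt
      · exact key x y hlt (by omega) heq
      · exact key y x hlt (by omega) heq.symm
  · -- lower bound
    intro R hR
    by_contra hlt
    push_neg at hlt
    rcases Nat.eq_zero_or_pos a with ha0 | ha
    · subst ha0
      rcases Nat.eq_zero_or_pos c with hc0 | hc
      · omega
      · rw [Nat.zero_pow hc] at hlt
        omega
    rcases Nat.eq_zero_or_pos c with hc0 | hc
    · subst hc0
      rw [pow_zero] at hlt
      have hR0 : R = 0 := by omega
      obtain ⟨f, fle, finc, _⟩ := hR (fun _ _ => 0) (fun x y hxy hy => by omega)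
      have h1 : f 0 < f 1 := finc 0 (by omega)
      have h2 := fle 1 (by omega)
      have h3 := fle 0 (by omega)
      omega
    have hRlt : R < a ^ c := hlt
    obtain ⟨f, fle, finc, fcol⟩ := hR (DC a c) (by
      intro x y hxy hy
      rw [DC]
      rw [Finset.sup_lt_iff (show (⊥ : ℕ) < c from hc)]
      intro i hi
      exact Finset.mem_range.mp (Finset.mem_filter.mp hi).1)
    have hcolall : ∀ i, i + 1 < a + 1 → DC a c (f i) (f (i + 1)) = DC a c (f 0) (f 1) := by
      intro i
      induction i with
      | zero => intro _; rfl
      | succ i ih =>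
        intro hi
        rw [← fcol i (by omega)]
        exact ih (by omega)
    have hmono : ∀ i, i + 1 < a + 1 → dg a (DC a c (f 0) (f 1)) (f i) <
        dg a (DC a c (f 0) (f 1)) (f (i + 1)) := by
      intro i hi
      have hf : f (i + 1) < a ^ c := lt_of_le_of_lt (fle (i + 1) (by omega)) hRlt
      have := dg_DC_lt ha (finc i hi) hf
      rwa [hcolall i hi] at this
    have hstep : ∀ i, i ≤ a → i ≤ dg a (DC a c (f 0) (f 1)) (f i) := by
      intro i
      induction i with
      | zero => intro _; omega
      | succ i ih =>
        intro hi
        have h1 := hmono i (by omega)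
        have h2 := ih (by omega)
        omega
    have h1 := hstep a le_rfl
    have h2 : dg a (DC a c (f 0) (f 1)) (f a) < a := Nat.mod_lt _ ha
    omega
end

section
/- Let f : ℕ → ℕ be monotone (nondecreasing). Then for all c and a, D_{c+1}^f(a) ≥ g^{(f(a))}(a) − a, where g is the map x ↦ x + D_c^f(x) and g^{(f(a))} denotes its f(a)-fold iterate, i.e. D_{c+1}^f(a) is at least the result of iterating x ↦ x + D_c^f(x) f(a) times starting at a, minus a. -/
/-- `MDLat f c a D`: every `(a,f)`-bounded sequence `m₀,…,m_D` of `c`-tuples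
contains `i < j ≤ D` with `mᵢ ≤ mⱼ` componentwise. -/
def MDLat (f : ℕ → ℕ) (c a D : ℕ) : Prop :=
  ∀ m : ℕ → Fin c → ℕ, (∀ i, i ≤ D → ∀ k, m i k < f (a + i)) →
    ∃ i j, i < j ∧ j ≤ D ∧ ∀ k, m i k ≤ m j k

/-- For monotone `f`, `D_{c+1}^f(a) ≥ ((x ↦ x + D_c^f(x))^{f(a)}(a)) - a`:
iterating `f(a)` times the map `x ↦ x + D_c^f(x)` starting at `a`. -/
theorem D_succ_ge_iterate (f : ℕ → ℕ) (hf : Monotone f) (c a : ℕ)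
    (D : ℕ → ℕ) (hD : ∀ x, IsLeast {d | MDLat f c x d} (D x))
    (D' : ℕ) (hD' : IsLeast {d | MDLat f (c + 1) a d} D') :
    (fun x => x + D x)^[f a] a - a ≤ D' := by
  classical
  set g : ℕ → ℕ := fun x => x + D x with hg
  -- maximal bad sequences of c-tuples
  have bad : ∀ x, ∃ m : ℕ → Fin c → ℕ,
      (∀ i, i < D x → ∀ k, m i k < f (x + i)) ∧
      (∀ i j, i < j → j < D x → ∃ k, m j k < m i k) := by
    intro x
    rcases Nat.eq_zero_or_pos (D x) with h0 | hpos
    · exact ⟨fun _ _ => 0, fun i hi => by omega, fun i j _ hj => by omega⟩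
    · have hnot : ¬ MDLat f c x (D x - 1) := by
        intro h
        have := (hD x).2 h
        omega
      unfold MDLat at hnot
      push_neg at hnot
      obtain ⟨m, hb, hnd⟩ := hnot
      exact ⟨m, fun i hi k => hb i (by omega) k,
        fun i j hij hj => hnd i j hij (by omega)⟩
  have hga : ∀ n, a ≤ g^[n] a := by
    intro n
    induction n with
    | zero => simp
    | succ n ih =>
      rw [Function.iterate_succ_apply']
      calc a ≤ g^[n] a := ih
        _ ≤ g^[n] a + D (g^[n] a) := Nat.le_add_right _ _
  have main : ∀ n, n ≤ f a → ∃ m : ℕ → Fin (c+1) → ℕ,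
      (∀ i, i < g^[n] a - a → ∀ k, m i k < f (a + i)) ∧
      (∀ i, i < g^[n] a - a → f a - n ≤ m i (Fin.last c)) ∧
      (∀ i j, i < j → j < g^[n] a - a → ∃ k, m j k < m i k) := by
    intro n hn
    induction n with
    | zero =>
      refine ⟨fun _ _ => 0, ?_, ?_, ?_⟩
      · intro i hi; rw [Function.iterate_zero_apply] at hi; omega
      · intro i hi; rw [Function.iterate_zero_apply] at hi; omega
      · intro i j hij hj; rw [Function.iterate_zero_apply] at hj; omega
    | succ n ih =>
      obtain ⟨m, hb, hlast, hnd⟩ := ih (by omega)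
      set x := g^[n] a with hx
      set L := x - a with hLdef
      have hax : a ≤ x := hga n
      have hxL : x = a + L := by omega
      obtain ⟨m', hb', hnd'⟩ := bad x
      have hL1 : g^[n+1] a - a = L + D x := by
        rw [Function.iterate_succ_apply']
        show (x + D x) - a = L + D x
        omega
      set M : ℕ → Fin (c+1) → ℕ :=
        fun i => if i < L then m i else Fin.snoc (m' (i - L)) (f a - (n+1)) with hM
      refine ⟨M, ?_, ?_, ?_⟩
      · intro i hi k
        rw [hL1] at hi
        by_cases h : i < L
        · simpa [hM, h] using hb i h k
        · simp only [hM, h, if_false]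
          refine Fin.lastCases ?_ ?_ k
          · rw [Fin.snoc_last]
            have h1 : f a - (n+1) < f a := by omega
            exact lt_of_lt_of_le h1 (hf (Nat.le_add_right _ _))
          · intro k'
            rw [Fin.snoc_castSucc]
            have h2 : i - L < D x := by omega
            have h3 := hb' (i - L) h2 k'
            have h4 : x + (i - L) = a + i := by omega
            rwa [h4] at h3
      · intro i hi
        rw [hL1] at hi
        by_cases h : i < L
        · simp only [hM, h, if_true]
          have := hlast i h
          omega
        · simp only [hM, h, if_false, Fin.snoc_last]
          omega
      · intro i j hij hj
        rw [hL1] at hj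
        by_cases hjL : j < L
        · have hiL : i < L := by omega
          obtain ⟨k, hk⟩ := hnd i j hij hjL
          exact ⟨k, by simpa [hM, hiL, hjL] using hk⟩
        · by_cases hiL : i < L
          · refine ⟨Fin.last c, ?_⟩
            simp only [hM, hiL, hjL, if_true, if_false, Fin.snoc_last]
            have := hlast i hiL
            omega
          · have h1 : i - L < j - L := by omega
            have h2 : j - L < D x := by omega
            obtain ⟨k, hk⟩ := hnd' (i - L) (j - L) h1 h2
            refine ⟨Fin.castSucc k, ?_⟩
            simpa [hM, hiL, hjL, Fin.snoc_castSucc] using hk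
  obtain ⟨m, hb, _, hnd⟩ := main (f a) le_rfl
  by_contra hc
  push_neg at hc
  have hDS : D' < g^[f a] a - a := hc
  obtain ⟨i, j, hij, hjD, hdom⟩ := hD'.1 m (fun i hi k => hb i (by omega) k)
  obtain ⟨k, hk⟩ := hnd i j hij (by omega)
  exact absurd (hdom k) (by omega)
end

section
/- The 2-color identity-parameter Dickson function satisfies D_2(a) ≥ a² for all a, where D_2(a) is the least D such that every sequence m₀,…,m_D of pairs of natural numbers with max(mᵢ) < a + i for all i contains indices i < j with mᵢ ≤ mⱼ componentwise. -/
/-- `D_2(a) ≥ a²`, where `D_2(a)` is the least `D` such that every sequence of pairs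
`m₀,…,m_D` with `max(mᵢ) < a + i` contains `i < j ≤ D` with `mᵢ ≤ mⱼ` componentwise. -/
theorem D_two_ge_sq (a D : ℕ)
    (hD : IsLeast {D | ∀ m : ℕ → ℕ × ℕ,
      (∀ i, i ≤ D → max (m i).1 (m i).2 < a + i) →
      ∃ i j, i < j ∧ j ≤ D ∧ (m i).1 ≤ (m j).1 ∧ (m i).2 ≤ (m j).2} D) :
    a ^ 2 ≤ D := by
  by_contra h
  push_neg at h
  rcases Nat.eq_zero_or_pos a with ha | ha
  · simp [ha] at h
  have hsq : D < a * a := by nlinarith [sq_nonneg a, pow_two a]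
  have hdivmod : ∀ k r : ℕ, r < a → (a * k + r) / a = k ∧ (a * k + r) % a = r := by
    intro k r hr
    constructor
    · rw [Nat.mul_add_div ha, Nat.div_eq_of_lt hr]
      omega
    · rw [Nat.mul_add_mod, Nat.mod_eq_of_lt hr]
  set m : ℕ → ℕ × ℕ := fun i => (a - 1 - i / a, a + (i / a) * a - 1 - i % a) with hm
  have hbound : ∀ i, i ≤ D → max (m i).1 (m i).2 < a + i := by
    intro i _
    obtain ⟨k, r, hr, rfl⟩ : ∃ k r, r < a ∧ a * k + r = i :=
      ⟨i / a, i % a, Nat.mod_lt _ ha, by rw [Nat.div_add_mod]⟩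
    obtain ⟨hd, hmd⟩ := hdivmod k r hr
    have h1 : (m (a * k + r)).1 = a - 1 - k := by simp [hm, hd]
    have h2 : (m (a * k + r)).2 = a + k * a - 1 - r := by simp [hm, hd, hmd]
    rw [max_lt_iff, h1, h2]
    have : k * a = a * k := Nat.mul_comm k a
    constructor
    · omega
    · omega
  obtain ⟨i, j, hij, hjD, hle1, hle2⟩ := hD.1 m hbound
  have hiD : i ≤ D := le_trans (le_of_lt hij) hjD
  obtain ⟨ki, ri, hri, rfl⟩ : ∃ k r, r < a ∧ a * k + r = i :=
    ⟨i / a, i % a, Nat.mod_lt _ ha, by rw [Nat.div_add_mod]⟩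
  obtain ⟨kj, rj, hrj, rfl⟩ : ∃ k r, r < a ∧ a * k + r = j :=
    ⟨j / a, j % a, Nat.mod_lt _ ha, by rw [Nat.div_add_mod]⟩
  obtain ⟨hdi, hmi⟩ := hdivmod ki ri hri
  obtain ⟨hdj, hmj⟩ := hdivmod kj rj hrj
  have hki : ki < a := by
    by_contra hk
    push_neg at hk
    have : a * a ≤ a * ki := Nat.mul_le_mul_left a hk
    omega
  have hkj : kj < a := by
    by_contra hk
    push_neg at hk
    have : a * a ≤ a * kj := Nat.mul_le_mul_left a hk
    omega
  have hddle : ki ≤ kj := by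
    by_contra hk
    push_neg at hk
    have h1 : a * (kj + 1) ≤ a * ki := Nat.mul_le_mul_left a hk
    have h2 : a * (kj + 1) = a * kj + a := by ring
    omega
  have hle1' : a - 1 - ki ≤ a - 1 - kj := by
    have := hle1
    simp only [hm, hdi, hdj] at this
    exact this
  have hkk : ki = kj := by omega
  subst hkk
  have hle2' : a + ki * a - 1 - ri ≤ a + ki * a - 1 - rj := by
    have := hle2
    simp only [hm, hdi, hdj, hmi, hmj] at this
    exact this
  generalize ki * a = t at hle2'
  omega
end

section
/- For d ≥ 1, c ≥ 2: if every coloring C : [0,M]^d → c of d-element subsets of {0,…,M} admits a C-weakly homogeneous set of size m+1, then every coloring C : [0, 2^(M^(d+1))]^(d+1) → c admits a C-weakly homogeneous set of size m+1. In other words, wr_c^d(m) ≤ M implies wr_c^(d+1)(m) ≤ 2^(M^(d+1)). -/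
/-- `WHCd d C s h`: `h 0 < h 1 < ⋯ < h (s-1)` is weakly homogeneous for the
`d`-dimensional coloring `C`: consecutive `d`-tuples receive equal colors. -/
def WHCd (d : ℕ) (C : (Fin d → ℕ) → ℕ) (s : ℕ) (h : ℕ → ℕ) : Prop :=
  (∀ i, i + 1 < s → h i < h (i + 1)) ∧
  (∀ i, i + d < s → C (fun t => h (i + t)) = C (fun t => h (i + 1 + t)))

/-- `wrdAt d c R m`: every coloring of increasing `d`-tuples from `[0,R]` in `c`
colors admits a weakly homogeneous set of size `m + 1`. -/
def wrdAt (d c R m : ℕ) : Prop :=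
  ∀ C : (Fin d → ℕ) → ℕ, (∀ x, C x < c) →
    ∃ h : ℕ → ℕ, (∀ i, i < m + 1 → h i ≤ R) ∧ WHCd d C (m + 1) h

/-!
Stepping up in the style of Erdős–Rado. Given `C` on `(d+1)`-tuples from `[0, R]`, pick
`b 0 < b 1 < ⋯ < b M` greedily, each time keeping the largest class of the remaining points on which
the color of `(b v₀, …, b v_{d-2}, b k, x)` is, for every choice of earlier indices `v`, independent
of `x`. Then `C (b y₀, …, b y_{d-1}, b l)` does not depend on `l > y_{d-1}`, so
`x ↦ C (b x₀, …, b x_{d-1}, b M)` is a `d`-coloring of `[0, M]`; a weakly homogeneous set `f` for it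
yields the weakly homogeneous set `b ∘ f` for `C`. Each step divides the pool by at most
`c ^ M ^ (d-1)`, the number of color patterns, and `R = 2 ^ M ^ (d+1)` is large enough as soon as
`c < M`; this holds whenever `d < m`, by coloring a tuple by its first entry mod `c`.
-/

open Finset

lemma exists_card_lt_mul_card_fiber {α β : Type*} [Fintype β] [Nonempty β] [DecidableEq β]
    (s : Finset α) (f : α → β) : ∃ y, #s < Fintype.card β * (#{x ∈ s | f x = y} + 1) := by
  obtain ⟨y, -, hy⟩ := exists_le_card_fiber_of_mul_le_card_of_maps_to (f := f)
    (t := univ) (fun a _ => mem_univ (f a)) univ_nonempty (n := #s / Fintype.card β)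
    (by rw [card_univ]; exact Nat.mul_div_le _ _)
  refine ⟨y, (Nat.lt_mul_div_succ _ (Fintype.card_pos (α := β))).trans_le ?_⟩
  exact Nat.mul_le_mul_left _ (Nat.succ_le_succ hy)

lemma mul_pow_pow_le_two_pow_pow {c M : ℕ} (e : ℕ) (hcM : c < M) :
    M * (c ^ M ^ e) ^ M ≤ 2 ^ M ^ (e + 2) := by
  obtain ⟨N, rfl⟩ : ∃ N, M = N + 1 := ⟨M - 1, by omega⟩
  have hc : c ≤ 2 ^ N := by have := N.lt_two_pow_self; omega
  have hM : N + 1 ≤ 2 ^ (N + 1) ^ (e + 1) :=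
    (N + 1).lt_two_pow_self.le.trans
      (Nat.pow_le_pow_right two_pos (Nat.le_self_pow (Nat.succ_ne_zero e) _))
  calc (N + 1) * (c ^ (N + 1) ^ e) ^ (N + 1)
      = (N + 1) * c ^ (N + 1) ^ (e + 1) := by rw [← pow_mul, pow_succ]
    _ ≤ 2 ^ (N + 1) ^ (e + 1) * (2 ^ N) ^ (N + 1) ^ (e + 1) :=
        Nat.mul_le_mul hM (Nat.pow_le_pow_left hc _)
    _ = 2 ^ (N + 1) ^ (e + 2) := by rw [← pow_mul, ← pow_add]; ring_nf

lemma window_succ (g : ℕ → ℕ) (i n : ℕ) :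
    (fun t : Fin (n + 1) => g (i + t)) = Fin.snoc (fun t : Fin n => g (i + t)) (g (i + n)) := by
  funext t
  refine Fin.lastCases ?_ (fun t => ?_) t <;> simp

section WeaklyHomogeneous

variable {d s : ℕ} {C : (Fin d → ℕ) → ℕ} {h : ℕ → ℕ}

lemma WHCd.strictMonoOn (hh : WHCd d C s h) : StrictMonoOn h (Set.Iio s) :=
  strictMonoOn_of_lt_add_one Set.ordConnected_Iio fun i _ _ hi => hh.1 i hi

lemma WHCd.self_le (hh : WHCd d C s h) : ∀ i < s, i ≤ h i := by
  intro i hi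
  induction i with
  | zero => exact Nat.zero_le _
  | succ i ih => exact (ih (by omega)).trans_lt (hh.1 i hi)

end WeaklyHomogeneous

section Bounds

variable {d c M m : ℕ}

lemma wrdAt_of_lt (hmd : m < d) (hmR : m ≤ M) : wrdAt d c M m :=
  fun _ _ => ⟨id, fun i hi => (Nat.lt_succ_iff.mp hi).trans hmR, fun i _ => i.lt_succ_self,
    fun _ hi => by omega⟩

lemma wrdAt.le (h : wrdAt d c M m) (hc : 0 < c) : m ≤ M := by
  obtain ⟨f, hfM, hf⟩ := h (fun _ => 0) fun _ => hc
  exact (hf.self_le m m.lt_succ_self).trans (hfM m m.lt_succ_self)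

lemma wrdAt.lt (h : wrdAt d c M m) (hd : 1 ≤ d) (hdm : d < m) (hc : 0 < c) : c < M := by
  obtain ⟨f, hfM, hf⟩ := h (fun x => x ⟨0, hd⟩ % c) fun _ => Nat.mod_lt _ hc
  have hmod : f 0 % c = f 1 % c := by simpa using hf.2 0 (by omega)
  have h01 : f 0 < f 1 := hf.1 0 (by omega)
  have h12 : f 1 < f 2 := hf.1 1 (by omega)
  have hgap : c ≤ f 1 - f 0 :=
    Nat.le_of_dvd (by omega) ((Nat.modEq_iff_dvd' h01.le).mp hmod)
  have := hfM 2 (by omega)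
  omega

end Bounds

section EndHomogeneous

variable {e : ℕ} {C : (Fin (e + 1 + 1) → ℕ) → ℕ} {b : ℕ → ℕ}

def IsEndHomogeneous (C : (Fin (e + 1 + 1) → ℕ) → ℕ) (b : ℕ → ℕ) (N : ℕ) : Prop :=
  ∀ (v : Fin e → ℕ) (j l l' : ℕ), (∀ t, v t < j) → j < l → j < l' → l ≤ N → l' ≤ N →
    C (b ∘ Fin.snoc (Fin.snoc v j) l) = C (b ∘ Fin.snoc (Fin.snoc v j) l')

lemma IsEndHomogeneous.color_window {M s i : ℕ} {f : ℕ → ℕ} (hE : IsEndHomogeneous C b M)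
    (hf : StrictMonoOn f (Set.Iio s)) (hfM : ∀ i < s, f i ≤ M) (hi : i + (e + 1) < s) :
    C (fun t : Fin (e + 1 + 1) => b (f (i + t))) =
      C (b ∘ Fin.snoc (fun t : Fin (e + 1) => f (i + t)) M) := by
  have hlast : f (i + e) < f (i + (e + 1)) :=
    hf (show i + e < s by omega) (show i + (e + 1) < s from hi) (by omega)
  calc C (fun t : Fin (e + 1 + 1) => b (f (i + t)))
      = C (b ∘ Fin.snoc (Fin.snoc (fun t : Fin e => f (i + t)) (f (i + e))) (f (i + (e + 1)))) := by
        rw [← window_succ f i e, ← window_succ f i (e + 1)]; rfl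
    _ = C (b ∘ Fin.snoc (Fin.snoc (fun t : Fin e => f (i + t)) (f (i + e))) M) :=
        hE _ _ _ _ (fun t => hf (show i + t < s by omega) (show i + e < s by omega) (by omega))
          hlast (hlast.trans_le (hfM _ hi)) (hfM _ hi) le_rfl
    _ = C (b ∘ Fin.snoc (fun t : Fin (e + 1) => f (i + t)) M) := by rw [window_succ f i e]

lemma WHCd.comp_of_isEndHomogeneous {M s : ℕ} {f : ℕ → ℕ} (hE : IsEndHomogeneous C b M)
    (hb : StrictMonoOn b (Set.Iic M)) (hfM : ∀ i < s, f i ≤ M)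
    (hf : WHCd (e + 1) (fun x => C (b ∘ Fin.snoc x M)) s f) : WHCd (e + 1 + 1) C s (b ∘ f) := by
  refine ⟨fun i hi => hb (hfM i (by omega)) (hfM (i + 1) hi) (hf.1 i hi), fun i hi => ?_⟩
  exact (hE.color_window hf.strictMonoOn hfM (by omega)).trans
    ((hf.2 i (by omega)).trans (hE.color_window hf.strictMonoOn hfM (by omega)).symm)

/-- The greedy construction after `k` steps: chosen points `b 0, …, b (k-1)` and pool `S`. -/
structure IsStage (C : (Fin (e + 1 + 1) → ℕ) → ℕ) (R k : ℕ) (b : ℕ → ℕ) (S : Finset ℕ) : Prop where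
  strictMonoOn : StrictMonoOn b (Set.Iio k)
  le : ∀ i < k, b i ≤ R
  mem_le : ∀ x ∈ S, x ≤ R
  lt_mem : ∀ i < k, ∀ x ∈ S, b i < x
  color_eq : ∀ j < k, ∀ v : Fin e → ℕ, (∀ t, v t < j) →
    ∀ x ∈ (S : Set ℕ) ∪ b '' Set.Ioo j k, ∀ y ∈ (S : Set ℕ) ∪ b '' Set.Ioo j k,
      C (Fin.snoc (Fin.snoc (b ∘ v) (b j)) x) = C (Fin.snoc (Fin.snoc (b ∘ v) (b j)) y)

lemma isStage_zero (C : (Fin (e + 1 + 1) → ℕ) → ℕ) (R : ℕ) (b : ℕ → ℕ) :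
    IsStage C R 0 b (range (R + 1)) where
  strictMonoOn := fun i hi => (Nat.not_lt_zero i hi).elim
  le := by simp
  mem_le := fun x hx => Nat.lt_succ_iff.mp (mem_range.mp hx)
  lt_mem := by simp
  color_eq := by simp

lemma IsStage.succ {R k a : ℕ} {S S' : Finset ℕ} (hS : IsStage C R k b S) (ha : a ∈ S)
    (hS' : S' ⊆ S) (haS' : ∀ x ∈ S', a < x)
    (hcol : ∀ v : Fin e → ℕ, (∀ t, v t < k) → ∀ x ∈ S', ∀ y ∈ S',
      C (Fin.snoc (Fin.snoc (b ∘ v) a) x) = C (Fin.snoc (Fin.snoc (b ∘ v) a) y)) :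
    IsStage C R (k + 1) (Function.update b k a) S' := by
  set b' := Function.update b k a
  have hb' : ∀ i < k, b' i = b i := fun i hi => Function.update_of_ne hi.ne _ _
  have hb'k : b' k = a := Function.update_self _ _ _
  have hb'v : ∀ j ≤ k, ∀ v : Fin e → ℕ, (∀ t, v t < j) → b' ∘ v = b ∘ v :=
    fun j hj v hv => funext fun t => hb' _ ((hv t).trans_le hj)
  refine ⟨fun i hi j hj hij => ?_, fun i hi => ?_, fun x hx => hS.mem_le x (hS' hx),
    fun i hi x hx => ?_, fun j hj v hv => ?_⟩
  · rcases (Nat.lt_succ_iff.mp hj).lt_or_eq with hjk | rfl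
    · rw [hb' i (hij.trans hjk), hb' j hjk]
      exact hS.strictMonoOn (hij.trans hjk) hjk hij
    · rw [hb' i hij, hb'k]
      exact hS.lt_mem i hij a ha
  · rcases (Nat.lt_succ_iff.mp hi).lt_or_eq with hik | rfl
    · rw [hb' i hik]; exact hS.le i hik
    · rw [hb'k]; exact hS.mem_le a ha
  · rcases (Nat.lt_succ_iff.mp hi).lt_or_eq with hik | rfl
    · rw [hb' i hik]; exact hS.lt_mem i hik x (hS' hx)
    · rw [hb'k]; exact haS' x hx
  rw [hb'v j (Nat.lt_succ_iff.mp hj) v hv]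
  rcases (Nat.lt_succ_iff.mp hj).lt_or_eq with hjk | rfl
  · have hsub : (S' : Set ℕ) ∪ b' '' Set.Ioo j (k + 1) ⊆ (S : Set ℕ) ∪ b '' Set.Ioo j k := by
      rintro x (hx | ⟨l, ⟨hjl, hlk⟩, rfl⟩)
      · exact Or.inl (hS' hx)
      rcases (Nat.lt_succ_iff.mp hlk).lt_or_eq with hlk | rfl
      · exact Or.inr ⟨l, ⟨hjl, hlk⟩, (hb' l hlk).symm⟩
      · exact Or.inl (by rw [hb'k]; exact ha)
    rw [hb' j hjk]
    exact fun x hx y hy => hS.color_eq j hjk v hv x (hsub hx) y (hsub hy)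
  · have hempty : Set.Ioo j (j + 1) = ∅ :=
      Set.eq_empty_iff_forall_notMem.mpr fun _ ⟨h₁, h₂⟩ => by omega
    simp only [hempty, Set.image_empty, Set.union_empty, mem_coe, hb'k]
    exact hcol v hv

lemma IsStage.exists_succ {c R k M : ℕ} {S : Finset ℕ} (hS : IsStage C R k b S)
    (hC : ∀ x, C x < c) (hkM : k ≤ M) (hne : S.Nonempty) :
    ∃ S', IsStage C R (k + 1) (Function.update b k (S.min' hne)) S' ∧
      #S ≤ c ^ M ^ e * (#S' + 1) := by
  set a := S.min' hne
  have : NeZero c := ⟨(Nat.zero_lt_of_lt (hC 0)).ne'⟩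
  let pattern : ℕ → (Fin e → Fin M) → Fin c := fun x v =>
    ⟨C (Fin.snoc (Fin.snoc (b ∘ Fin.val ∘ v) a) x), hC _⟩
  obtain ⟨p, hp⟩ := exists_card_lt_mul_card_fiber (S.erase a) pattern
  refine ⟨{x ∈ S.erase a | pattern x = p}, hS.succ (S.min'_mem hne) ?_ ?_ ?_, ?_⟩
  · exact (filter_subset _ _).trans (erase_subset _ _)
  · intro x hx
    have hxS := (mem_filter.mp hx).1
    exact (S.min'_le x (mem_of_mem_erase hxS)).lt_of_ne (ne_of_mem_erase hxS).symm
  · intro v hv x hx y hy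
    exact congrArg (fun q => (q fun t => ⟨v t, (hv t).trans_le hkM⟩ : Fin c).val)
      ((mem_filter.mp hx).2.trans (mem_filter.mp hy).2.symm)
  · rw [card_erase_of_mem (S.min'_mem hne)] at hp
    simpa [Fintype.card_fun] using Nat.le_of_pred_lt hp

lemma exists_isStage {c R M : ℕ} (hC : ∀ x, C x < c) (hR : M * (c ^ M ^ e) ^ M ≤ R) :
    ∀ k ≤ M + 1, ∃ b S, IsStage C R k b S ∧ R + 1 ≤ (#S + k) * (c ^ M ^ e) ^ k := by
  set D := c ^ M ^ e
  have hD : 1 ≤ D := Nat.one_le_pow _ _ (Nat.zero_lt_of_lt (hC 0))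
  intro k hk
  induction k with
  | zero => exact ⟨id, range (R + 1), isStage_zero C R id, by simp⟩
  | succ k ih =>
    obtain ⟨b, S, hS, hcard⟩ := ih (by omega)
    have hne : S.Nonempty := by
      rw [← card_pos]
      by_contra h0
      have : k * D ^ k ≤ M * D ^ M :=
        Nat.mul_le_mul (show k ≤ M by omega) (Nat.pow_le_pow_right hD (show k ≤ M by omega))
      rw [Nat.eq_zero_of_not_pos h0, zero_add] at hcard
      omega
    obtain ⟨S', hS', hS'card⟩ := hS.exists_succ hC (show k ≤ M by omega) hne
    refine ⟨_, S', hS', ?_⟩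
    calc R + 1 ≤ (#S + k) * D ^ k := hcard
      _ ≤ (D * (#S' + 1) + k * D) * D ^ k :=
          Nat.mul_le_mul_right _ (Nat.add_le_add hS'card (Nat.le_mul_of_pos_right k hD))
      _ = (#S' + (k + 1)) * D ^ (k + 1) := by ring

lemma IsStage.isEndHomogeneous {R M : ℕ} {S : Finset ℕ} (hS : IsStage C R (M + 1) b S) :
    IsEndHomogeneous C b M := by
  intro v j l l' hv hjl hjl' hl hl'
  simp only [Fin.comp_snoc]
  exact hS.color_eq j (by omega) v hv _ (Or.inr ⟨l, ⟨hjl, by omega⟩, rfl⟩)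
    _ (Or.inr ⟨l', ⟨hjl', by omega⟩, rfl⟩)

end EndHomogeneous

theorem wr_dim_step_general (d c m M : ℕ) (hd : 1 ≤ d)
    (h : wrdAt d c M m) : wrdAt (d + 1) c (2 ^ M ^ (d + 1)) m := by
  intro C hC
  have hc : 0 < c := Nat.zero_lt_of_lt (hC 0)
  rcases le_or_gt m d with hmd | hdm
  · have hMR : M ≤ 2 ^ M ^ (d + 1) :=
      (Nat.le_self_pow (Nat.succ_ne_zero d) M).trans (Nat.lt_two_pow_self).le
    exact wrdAt_of_lt (by omega) ((h.le hc).trans hMR) C hC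
  obtain ⟨e, rfl⟩ : ∃ e, d = e + 1 := ⟨d - 1, by omega⟩
  obtain ⟨b, S, hS, -⟩ := exists_isStage hC
    (mul_pow_pow_le_two_pow_pow e (h.lt hd hdm hc)) (M + 1) le_rfl
  obtain ⟨f, hfM, hf⟩ := h (fun x => C (b ∘ Fin.snoc x M)) fun _ => hC _
  refine ⟨b ∘ f, fun i hi => hS.le _ (Nat.lt_succ_of_le (hfM i hi)), ?_⟩
  exact hf.comp_of_isEndHomogeneous hS.isEndHomogeneous
    (hS.strictMonoOn.mono fun i hi => Nat.lt_succ_of_le hi) hfM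

/-- Inductive upper bound: `wr_c^d(m) ≤ M` implies `wr_c^{d+1}(m) ≤ 2^(M^(d+1))`. -/
theorem wr_dim_step (d c m M : ℕ) (hd : 1 ≤ d) (hc : 2 ≤ c)
    (h : wrdAt d c M m) : wrdAt (d + 1) c (2 ^ M ^ (d + 1)) m :=
  wr_dim_step_general d c m M hd h
end

section
/- The maximal length of a finite bad sequence of pairs (m₀, m₁ ∈ ℕ²) whose i-th element has both coordinates strictly less than a+i is at least a²: explicitly, there exists a bad sequence of pairs (x_i, y_i), i = 0, …, a²−1, with max(x_i, y_i) < a + i for all i. -/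
/-- There is a bad sequence of pairs `(xᵢ, yᵢ)`, `i = 0, …, a² - 1`, with
`max xᵢ yᵢ < a + i` for all `i`; so the maximal length of such bad sequences is at least `a²`. -/
theorem exists_bad_pair_sequence_sq (a : ℕ) :
    ∃ p : ℕ → ℕ × ℕ,
      (∀ i, i < a ^ 2 → max (p i).1 (p i).2 < a + i) ∧
      (∀ i j, i < j → j < a ^ 2 → ¬ ((p i).1 ≤ (p j).1 ∧ (p i).2 ≤ (p j).2)) := by
  refine ⟨fun i => (a - 1 - i / a, a * (i / a) + (a - 1 - i % a)), ?_, ?_⟩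
  · intro i hi
    have ha : 0 < a := by
      rcases Nat.eq_zero_or_pos a with h | h
      · subst h; simp at hi
      · exact h
    have h := Nat.div_add_mod i a
    have hm : i % a < a := Nat.mod_lt _ ha
    simp only [max_lt_iff]
    constructor
    · have key : ∀ q : ℕ, a - 1 - q < a + i := by intro q; omega
      exact key _
    · have key : ∀ s r : ℕ, s + r = i → r < a → s + (a - 1 - r) < a + i := by
        intro s r h1 h2; omega
      exact key _ _ h hm
  · intro i j hij hj hle
    have ha : 0 < a := by
      rcases Nat.eq_zero_or_pos a with h | h
      · subst h; simp at hj
      · exact h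
    have hqle : i / a ≤ j / a := Nat.div_le_div_right hij.le
    rcases eq_or_lt_of_le hqle with heq | hlt
    · have hi' := Nat.div_add_mod i a
      have hj' := Nat.div_add_mod j a
      have hmi : i % a < a := Nat.mod_lt _ ha
      have hmj : j % a < a := Nat.mod_lt _ ha
      obtain ⟨_, h2⟩ := hle
      simp only at h2
      rw [← heq] at h2 hj'
      have key : ∀ s ri rj : ℕ, s + ri = i → s + rj = j → ri < a → rj < a →
          s + (a - 1 - ri) ≤ s + (a - 1 - rj) → False := by
        intro s ri rj e1 e2 l1 l2 l3; omega
      exact key _ _ _ hi' hj' hmi hmj h2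
    · have hqa : j / a < a := by
        rw [Nat.div_lt_iff_lt_mul ha]
        have h2 : a ^ 2 = a * a := sq a
        omega
      obtain ⟨h1, _⟩ := hle
      simp only at h1
      have key : ∀ qi qj : ℕ, qi < qj → qj < a → a - 1 - qi ≤ a - 1 - qj → False := by
        intro qi qj l1 l2 l3; omega
      exact key _ _ hlt hqa h1
end

section
/- If every coloring of pairs in c colors from any interval [a,R] admits arbitrarily weakly homogeneous sets governed by f (i.e., WPH holds for pairs, c colors, parameter f), and C : [a,∞)² → c is any coloring of pairs of natural numbers ≥ a, then for every a there exists a finite C-weakly homogeneous set H ⊆ [a,∞) with |H| > f(min H). Conversely, if CG : [a,∞)² → c is such that every finite weakly homogeneous H has |H| ≤ f(min H), then there exists an infinite (a,f)-bad sequence of c-tuples. -/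
/-- `WPHat f c a R`: every coloring of pairs from `[a,R]` in `c` colors admits a
weakly homogeneous `H ⊆ [a,R]` with `|H| > f (min H)`. -/
def WPHat (f : ℕ → ℕ) (c a R : ℕ) : Prop :=
  ∀ C : ℕ → ℕ → ℕ, (∀ x y, a ≤ x → x < y → y ≤ R → C x y < c) →
    ∃ (s : ℕ) (h : ℕ → ℕ), (∀ i, i < s → a ≤ h i ∧ h i ≤ R) ∧ WHC C s h ∧ f (h 0) < s

/-- elements of an increasing chain are at least the first element -/
lemma whc_mono (s : ℕ) (h : ℕ → ℕ) (hw : ∀ i, i + 1 < s → h i < h (i + 1)) :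
    ∀ t, t < s → h 0 ≤ h t := by
  intro t
  induction t with
  | zero => intro _; exact le_refl _
  | succ t ih =>
      intro ht
      exact le_trans (ih (by omega)) (le_of_lt (hw t (by omega)))

/-- `PP CG a i k s`: there is a weakly homogeneous chain of length `s+1`
starting at `a+i` whose first color is `k` (when it has ≥ 2 elements). -/
def PP (CG : ℕ → ℕ → ℕ) (a i k s : ℕ) : Prop :=
  ∃ h : ℕ → ℕ, h 0 = a + i ∧ WHC CG (s + 1) h ∧ (0 < s → CG (h 0) (h 1) = k)

lemma PP_zero (CG : ℕ → ℕ → ℕ) (a i k : ℕ) : PP CG a i k 0 :=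
  ⟨fun _ => a + i, rfl, ⟨fun _ hi => by omega, fun _ hi => by omega⟩, fun h => by omega⟩

/-- Infinite version of the bad-coloring/bad-sequence correspondence:
(1) if `WPH^f_c` holds then every coloring of pairs from `[a,∞)` admits a finite
weakly homogeneous `H` with `|H| > f (min H)`; (2) conversely, a coloring of
`[a,∞)` all of whose finite weakly homogeneous sets `H` have `|H| ≤ f (min H)`
yields an infinite `(a,f)`-bad sequence of `c`-tuples. -/
theorem infinite_correspondence (c : ℕ) (f : ℕ → ℕ) :
    ((∀ a, ∃ R, WPHat f c a R) →
      ∀ a, ∀ C : ℕ → ℕ → ℕ, (∀ x y, a ≤ x → x < y → C x y < c) →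
        ∃ (s : ℕ) (h : ℕ → ℕ), (∀ i, i < s → a ≤ h i) ∧ WHC C s h ∧ f (h 0) < s) ∧
    (∀ a, ∀ CG : ℕ → ℕ → ℕ, (∀ x y, a ≤ x → x < y → CG x y < c) →
      (∀ (s : ℕ) (h : ℕ → ℕ), (∀ i, i < s → a ≤ h i) → WHC CG s h → s ≤ f (h 0)) →
      ∃ m : ℕ → Fin c → ℕ,
        (∀ i k, m i k < f (a + i)) ∧
        (∀ i j, i < j → ¬ ∀ k, m i k ≤ m j k)) := by
  classical
  constructor
  · -- Part 1
    intro hwph a C hC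
    obtain ⟨R, hR⟩ := hwph a
    obtain ⟨s, h, hmem, hwhc, hlt⟩ := hR C (fun x y hx hxy _ => hC x y hx hxy)
    exact ⟨s, h, fun i hi => (hmem i hi).1, hwhc, hlt⟩
  · -- Part 2
    intro a CG hCG hbound
    rcases Nat.eq_zero_or_pos c with hc | hc
    · exact absurd (hCG a (a + 1) le_rfl (by omega)) (by omega)
    -- key bound: any chain realizing PP has length ≤ f (a+i)
    have key : ∀ i k s, PP CG a i k s → s + 1 ≤ f (a + i) := by
      intro i k s ⟨h, h0, hwhc, _⟩
      have := hbound (s + 1) h (fun t ht => by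
        have := whc_mono (s + 1) h hwhc.1 t ht
        omega) hwhc
      rwa [h0] at this
    have fpos : ∀ i, 1 ≤ f (a + i) := fun i => key i 0 0 (PP_zero CG a i 0)
    refine ⟨fun i k => Nat.findGreatest (PP CG a i k) (f (a + i) - 1), ?_, ?_⟩
    · intro i k
      show Nat.findGreatest (PP CG a i (k : ℕ)) (f (a + i) - 1) < f (a + i)
      have := Nat.findGreatest_le (P := PP CG a i (k : ℕ)) (f (a + i) - 1)
      have := fpos i
      omega
    · intro i j hij hle
      set k : ℕ := CG (a + i) (a + j) with hk
      have hkc : k < c := hCG (a + i) (a + j) (by omega) (by omega)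
      have hlek := hle ⟨k, hkc⟩
      set s : ℕ := Nat.findGreatest (PP CG a j k) (f (a + j) - 1) with hs
      -- a realizer of PP CG a j k s
      have hreal : PP CG a j k s :=
        Nat.findGreatest_spec (Nat.zero_le _) (PP_zero CG a j k)
      obtain ⟨h, h0, ⟨hinc, hhom⟩, hcol⟩ := hreal
      -- prepend a+i
      set h' : ℕ → ℕ := fun t => match t with | 0 => a + i | t + 1 => h t with hh'
      have hP : PP CG a i k (s + 1) := by
        refine ⟨h', rfl, ⟨?_, ?_⟩, ?_⟩
        · intro t ht
          match t with
          | 0 => show a + i < h 0; rw [h0]; omega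
          | t + 1 => exact hinc t (by omega)
        · intro t ht
          match t with
          | 0 =>
            show CG (a + i) (h 0) = CG (h 0) (h 1)
            rw [hcol (by omega), h0]
          | t + 1 => exact hhom t (by omega)
        · intro _
          show CG (a + i) (h 0) = k
          rw [h0]
      have hlen : s + 2 ≤ f (a + i) := key i k (s + 1) hP
      have : s + 1 ≤ Nat.findGreatest (PP CG a i k) (f (a + i) - 1) :=
        Nat.le_findGreatest (by omega) hP
      simp only [hs] at hlek
      omega
end

section
/- For the 3-dimensional weak Ramsey number: wr_c^3(m) ≤ 2^(m^(6c)) for all m ≥ 1 and c, i.e., every coloring C : [0, 2^(m^(6c))]³ → c of increasing triples admits a C-weakly homogeneous set of size m+1. -/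
open Finset

namespace WeakRamsey

theorem exists_consecutive_pairs_eq {β : Type*} (f : ℕ → ℕ → β) (s : Finset β)
    (hf : ∀ x y, x < y → y ≤ 2 ^ #s → f x y ∈ s) :
    ∃ x y z, x < y ∧ y < z ∧ z ≤ 2 ^ #s ∧ f x y = f y z := by
  classical
  let colorsInto (y : ℕ) : Finset β := (range y).image (f · y)
  have hmaps : ∀ y ∈ range (2 ^ #s + 1), colorsInto y ∈ s.powerset := fun y hy =>
    mem_powerset.2 fun b hb => by
      obtain ⟨x, hx, rfl⟩ := mem_image.1 hb
      exact hf x y (mem_range.1 hx) (Nat.lt_succ_iff.1 (mem_range.1 hy))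
  have hcard : #s.powerset < #(range (2 ^ #s + 1)) := by simp
  obtain ⟨x, hx, y, hy, hne, heq⟩ := exists_ne_map_eq_of_card_lt_of_maps_to hcard hmaps
  wlog hxy : x < y generalizing x y
  · exact this y hy x hx hne.symm heq.symm (by omega)
  have hmem : f x y ∈ colorsInto x := heq ▸ mem_image_of_mem (f · y) (mem_range.2 hxy)
  obtain ⟨w, hw, hwx⟩ := mem_image.1 hmem
  exact ⟨w, x, y, mem_range.1 hw, hxy, Nat.lt_succ_iff.1 (mem_range.1 hy), hwx⟩

variable (C : (Fin 3 → ℕ) → ℕ)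

def chainLen (j : ℕ) : ℕ → ℕ → ℕ
  | x, y => ((range x).attach.filter fun w => C ![w.1, x, y] = j).sup
      fun w => chainLen j w x + 1
termination_by x => x
decreasing_by exact mem_range.1 w.2

theorem chainLen_lt_chainLen {j w x y : ℕ} (hwx : w < x) (hC : C ![w, x, y] = j) :
    chainLen C j w x < chainLen C j x y := by
  rw [chainLen.eq_1 C j x y, Nat.lt_iff_add_one_le]
  exact le_sup (f := fun w : range x => chainLen C j w x + 1)
    (mem_filter.2 ⟨mem_attach _ ⟨w, mem_range.2 hwx⟩, hC⟩)

theorem exists_lt_of_lt_chainLen {j n x y : ℕ} (h : n < chainLen C j x y) :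
    ∃ w < x, C ![w, x, y] = j ∧ n ≤ chainLen C j w x := by
  rw [chainLen, Nat.lt_iff_add_one_le, Finset.le_sup_iff (Nat.succ_pos n)] at h
  obtain ⟨⟨w, hw⟩, hmem, hn⟩ := h
  exact ⟨w, mem_range.1 hw, (mem_filter.1 hmem).2, Nat.le_of_succ_le_succ hn⟩

def extendAt (h : ℕ → ℕ) (k y : ℕ) (i : ℕ) : ℕ :=
  if i ≤ k then h i else y + (i - (k + 1))

theorem extendAt_of_le {h : ℕ → ℕ} {k y i : ℕ} (hi : i ≤ k) : extendAt h k y i = h i :=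
  if_pos hi

theorem extendAt_succ (h : ℕ → ℕ) (k y : ℕ) : extendAt h k y (k + 1) = y := by
  simp [extendAt]

theorem strictMono_extendAt {h : ℕ → ℕ} {k y : ℕ} (hmono : StrictMono h) (hy : h k < y) :
    StrictMono (extendAt h k y) := by
  refine strictMono_nat_of_lt_succ fun i => ?_
  unfold extendAt
  split_ifs with h₁ h₂
  · exact hmono i.lt_succ_self
  · obtain rfl : i = k := by omega
    simpa using hy
  · omega
  · omega

theorem exists_chain_of_le_chainLen (j : ℕ) :
    ∀ n {x y : ℕ}, x < y → n ≤ chainLen C j x y →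
      ∃ h : ℕ → ℕ, StrictMono h ∧ h n = x ∧ h (n + 1) = y ∧
        ∀ i < n, C ![h i, h (i + 1), h (i + 2)] = j
  | 0, x, y, hxy, _ =>
    ⟨extendAt (x + ·) 0 y, strictMono_extendAt (strictMono_id.const_add x) (by simpa using hxy),
      extendAt_of_le le_rfl, extendAt_succ _ _ _, fun _ hi => absurd hi (Nat.not_lt_zero _)⟩
  | n + 1, x, y, hxy, hn => by
    obtain ⟨w, hwx, hC, hw⟩ := exists_lt_of_lt_chainLen C hn
    obtain ⟨h, hmono, hhw, hhx, hcol⟩ := exists_chain_of_le_chainLen j n hwx hw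
    refine ⟨extendAt h (n + 1) y, strictMono_extendAt hmono (hhx ▸ hxy),
      (extendAt_of_le le_rfl).trans hhx, extendAt_succ _ _ _, fun i hi => ?_⟩
    rw [extendAt_of_le (by omega), extendAt_of_le (by omega)]
    rcases Nat.lt_succ_iff_lt_or_eq.1 hi with hi | rfl
    · rw [extendAt_of_le (by omega)]
      exact hcol i hi
    · rw [extendAt_succ, hhw, hhx]
      exact hC

theorem exists_le_chainLen {c : ℕ} (hC : ∀ x, C x < c) (n : ℕ) :
    ∃ j x y, x < y ∧ y ≤ 2 ^ n ^ c ∧ n ≤ chainLen C j x y := by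
  by_contra! hshort
  let lengths (x y : ℕ) : Fin c → ℕ := fun j => chainLen C j x y
  have hmaps : ∀ x y, x < y → y ≤ 2 ^ #(Fintype.piFinset fun _ : Fin c => range n) →
      lengths x y ∈ Fintype.piFinset fun _ => range n := by
    intro x y hxy hy
    simp only [Fintype.card_piFinset, card_range, prod_const, card_univ, Fintype.card_fin,
      Fintype.mem_piFinset, mem_range] at hy ⊢
    exact fun j => hshort j x y hxy hy
  obtain ⟨w, x, y, hwx, hxy, -, heq⟩ := exists_consecutive_pairs_eq lengths _ hmaps
  have := chainLen_lt_chainLen C hwx (rfl : C ![w, x, y] = _)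
  exact this.ne (congrFun heq ⟨_, hC _⟩)

end WeakRamsey

open WeakRamsey

/-- `wr_c^3(m) ≤ 2^(m^(6c))` for `m ≥ 1`: every coloring of increasing triples from
`[0, 2^(m^(6c))]` in `c` colors admits a weakly homogeneous set of size `m + 1`. -/
theorem wr_three_upper_bound (c m : ℕ) (hm : 1 ≤ m) :
    ∀ C : (Fin 3 → ℕ) → ℕ, (∀ x, C x < c) →
      ∃ h : ℕ → ℕ, (∀ i, i < m + 1 → h i ≤ 2 ^ m ^ (6 * c)) ∧ WHCd 3 C (m + 1) h := by
  intro C hC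
  obtain ⟨n, rfl⟩ : ∃ n, m = n + 1 := ⟨m - 1, by omega⟩
  obtain ⟨j, x, y, hxy, hy, hn⟩ := exists_le_chainLen C hC n
  obtain ⟨h, hmono, -, hhy, hcol⟩ := exists_chain_of_le_chainLen C j n hxy hn
  have hexp : n ^ c ≤ (n + 1) ^ (6 * c) :=
    (Nat.pow_le_pow_left n.le_succ c).trans (Nat.pow_le_pow_right n.succ_pos (by omega))
  have htriple (i : ℕ) : (fun t : Fin 3 => h (i + t)) = ![h i, h (i + 1), h (i + 2)] := by
    funext t; fin_cases t <;> rfl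
  refine ⟨h, fun i hi => ?_, fun i _ => hmono i.lt_succ_self, fun i hi => ?_⟩
  · calc h i ≤ h (n + 1) := hmono.monotone (by omega)
      _ ≤ 2 ^ (n + 1) ^ (6 * c) := hhy ▸ hy.trans (Nat.pow_le_pow_right two_pos hexp)
  · rw [htriple, htriple, hcol i (by omega), hcol (i + 1) (by omega)]
end

section
/- Every finite coloring C : [0,R]² → c with R ≥ a^c admits, for any target size a+1, a C-weakly homogeneous set of size a+1 whose minimum can be taken as the least element of a chain constructed greedily; in particular wr_c(a) ≤ a^c: every coloring C : [0,a^c]² → c admits a C-weakly homogeneous set of cardinality a+1. -/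
/-- A weakly homogeneous chain of length `s` inside `[0,R]` ending at `x`, whose last
pair has color `j` (or `s = 1`, with no pairs yet). -/
def GoodChain (C : ℕ → ℕ → ℕ) (R s x j : ℕ) : Prop :=
  ∃ h : ℕ → ℕ, (∀ i, i < s → h i ≤ R) ∧ WHC C s h ∧ h (s - 1) = x ∧
    (s = 1 ∨ (2 ≤ s ∧ C (h (s - 2)) (h (s - 1)) = j))

/-- `wr_c(a) ≤ a^c`: every coloring of pairs from `[0, a^c]` in `c` colors admits a
weakly homogeneous set of cardinality `a + 1`. -/
theorem wr_upper_bound (a c : ℕ) :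
    ∀ C : ℕ → ℕ → ℕ, (∀ x y, x < y → y ≤ a ^ c → C x y < c) →
      ∃ h : ℕ → ℕ, (∀ i, i < a + 1 → h i ≤ a ^ c) ∧ WHC C (a + 1) h := by
  intro C hC
  rcases Nat.eq_zero_or_pos a with rfl | ha
  · exact ⟨fun _ => 0, fun _ _ => Nat.zero_le _, fun i hi => by omega, fun i hi => by omega⟩
  by_contra hno
  push_neg at hno
  classical
  set R := a ^ c with hR
  -- any good chain has length at most `a`
  have hbound : ∀ s x j, GoodChain C R s x j → s ≤ a := by
    rintro s x j ⟨h, hb, hw, -, -⟩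
    by_contra hs
    push_neg at hs
    exact hno h (fun i hi => hb i (by omega))
      ⟨fun i hi => hw.1 i (by omega), fun i hi => hw.2 i (by omega)⟩
  have hbase : ∀ x j, x ≤ R → GoodChain C R 1 x j := by
    intro x j hx
    exact ⟨fun _ => x, fun _ _ => hx, ⟨fun i hi => by omega, fun i hi => by omega⟩,
      rfl, Or.inl rfl⟩
  -- extension lemma
  have hext : ∀ s x y j, GoodChain C R s x j → x < y → y ≤ R → C x y = j →
      GoodChain C R (s + 1) y j := by
    rintro s x y j ⟨h, hb, hw, hend, hlast⟩ hxy hy hcxy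
    have hs1 : 1 ≤ s := by rcases hlast with h1 | h2 <;> omega
    refine ⟨fun i => if i < s then h i else y, ?_, ⟨?_, ?_⟩, ?_, ?_⟩
    · intro i hi
      by_cases hi' : i < s
      · simpa [hi'] using hb i hi'
      · simpa [hi'] using hy
    · intro i hi
      by_cases h2 : i + 1 < s
      · have h1 : i < s := by omega
        simpa [h1, h2] using hw.1 i h2
      · have heq : i + 1 = s := by omega
        have h1 : i < s := by omega
        have hx : h i = x := by rw [← hend]; congr 1; omega
        simp only [if_pos h1, if_neg h2, hx]
        exact hxy
    · intro i hi
      have h1 : i < s := by omega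
      have h2 : i + 1 < s := by omega
      by_cases h3 : i + 2 < s
      · simpa [h1, h2, h3] using hw.2 i h3
      · have heq : i + 2 = s := by omega
        rcases hlast with h1' | ⟨hs2, hcol⟩
        · omega
        · have e1 : h i = h (s - 2) := by congr 1; omega
          have e2 : h (i + 1) = h (s - 1) := by congr 1; omega
          beta_reduce
          rw [if_pos h1, if_pos h2, if_neg h3, e1, e2, hcol, hend, hcxy]
    · simp
    · refine Or.inr ⟨by omega, ?_⟩
      have e1 : s + 1 - 2 = s - 1 := by omega
      have e2 : ¬ (s + 1 - 1 < s) := by omega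
      have e3 : s - 1 < s := by omega
      simp only [Nat.add_sub_cancel, e1, if_pos e3, if_neg (by omega : ¬ s < s), hend, hcxy]
  -- the tuple of maximal chain lengths
  set M : ℕ → ℕ → ℕ := fun x j => Nat.findGreatest (fun s => GoodChain C R s x j) a with hM
  have hM1 : ∀ x j, x ≤ R → 1 ≤ M x j := fun x j hx =>
    Nat.le_findGreatest (P := fun s => GoodChain C R s x j) ha (hbase x j hx)
  have hMa : ∀ x j, M x j ≤ a := fun x j => Nat.findGreatest_le a
  have hMspec : ∀ x j, x ≤ R → GoodChain C R (M x j) x j := fun x j hx =>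
    Nat.findGreatest_spec (P := fun s => GoodChain C R s x j) ha (hbase x j hx)
  -- key step: equal tuples at x < y give a contradiction
  have key : ∀ x y : ℕ, x < y → y ≤ R → M x (C x y) = M y (C x y) → False := by
    intro x y hxy hy heq
    have hx : x ≤ R := by omega
    have hg : GoodChain C R (M x (C x y)) x (C x y) := hMspec x _ hx
    have h2 : GoodChain C R (M x (C x y) + 1) y (C x y) := hext _ _ _ _ hg hxy hy rfl
    have h3 : M x (C x y) + 1 ≤ a := hbound _ _ _ h2
    have h4 : M x (C x y) + 1 ≤ M y (C x y) := Nat.le_findGreatest (P := fun s => GoodChain C R s y (C x y)) h3 h2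
    omega
  -- pigeonhole
  have hcard : Fintype.card (Fin c → Fin a) < Fintype.card (Fin (R + 1)) := by
    simp [hR]
  set F : Fin (R + 1) → (Fin c → Fin a) := fun x j =>
    ⟨M x.val j.val - 1, by
      have h1 := hM1 x.val j.val (by omega)
      have h2 := hMa x.val j.val
      omega⟩ with hF
  obtain ⟨x, y, hne, hfe⟩ := Fintype.exists_ne_map_eq_of_card_lt F hcard
  have hMeq : ∀ j, j < c → M x.val j = M y.val j := by
    intro j hj
    have := congrFun hfe ⟨j, hj⟩
    have hv : M x.val j - 1 = M y.val j - 1 := congrArg Fin.val this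
    have h1 := hM1 x.val j (by omega)
    have h2 := hM1 y.val j (by omega)
    omega
  rcases lt_trichotomy x.val y.val with hlt | heq | hgt
  · have hj : C x.val y.val < c := hC _ _ hlt (by omega)
    exact key x.val y.val hlt (by omega) (hMeq _ hj)
  · exact hne (Fin.ext heq)
  · have hj : C y.val x.val < c := hC _ _ hgt (by omega)
    exact key y.val x.val hgt (by omega) (hMeq _ hj).symm
end
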